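/- arXiv:1404.6711 — 3 statements merged into one kernel-verified Lean document; each statement's English description precedes it below -/
import Mathlib

section
/- Let R be a commutative noetherian ring, let 𝔞 and 𝔟 be ideals of R with 𝔞 ⊆ 𝔟, and let 𝒮 be a class of R-modules that is closed under taking submodules and satisfies the C_𝔞 condition. If M is an R-module such that (0 :_M 𝔞) ∈ 𝒮, then Γ_𝔟(M) ∈ 𝒮. -/
/-! Since `a ≤ b`, every element of `Γ_b(M)` is killed by a power of `a`, so `Γ_a(Γ_b(M))` is
everything. The `a`-socle `(0 :_{Γ_b(M)} a)` embeds in `(0 :_M a) ∈ S`, hence lies in `S` by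
closure under submodules and isomorphisms, and `C_a` applied to `Γ_b(M)` concludes. -/

universe u

open Submodule

variable {R : Type u} [CommRing R]

/-- `Γ_a(M)`, the `a`-torsion submodule of `M`: the set of elements annihilated by
some power of the ideal `a`. -/
def torsionGamma (a : Ideal R) (M : Type u) [AddCommGroup M] [Module R M] :
    Submodule R M :=
  ⨆ n : ℕ, Submodule.torsionBySet R M ((a ^ n : Ideal R) : Set R)

/-- The class `S` satisfies the condition `C_a` on the module `M`:
if `Γ_a(M) = M` and `(0 :_M a) ∈ S` then `M ∈ S`. -/
def CCondOn (S : ModuleCat.{u} R → Prop) (a : Ideal R) (M : ModuleCat.{u} R) : Prop :=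
  torsionGamma a M = ⊤ →
    S (ModuleCat.of R (Submodule.torsionBySet R M (a : Set R))) → S M

/-- The class `S` satisfies the condition `C_a` (on every `R`-module). -/
def CCond (S : ModuleCat.{u} R → Prop) (a : Ideal R) : Prop :=
  ∀ M : ModuleCat.{u} R, CCondOn S a M

/-- The class `S` is closed under isomorphisms of `R`-modules. -/
def IsoClosed (S : ModuleCat.{u} R → Prop) : Prop :=
  ∀ ⦃M N : ModuleCat.{u} R⦄, (M ≃ₗ[R] N) → S M → S N

/-- `S` is a Serre subcategory of the category of `R`-modules: it is closed under
isomorphisms, contains the zero module, and is closed under submodules, quotient modules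
and extensions. -/
structure IsSerreClass (S : ModuleCat.{u} R → Prop) : Prop where
  iso : IsoClosed S
  zero : ∀ M : ModuleCat.{u} R, Subsingleton M → S M
  subobj : ∀ (M : ModuleCat.{u} R) (N : Submodule R M), S M → S (ModuleCat.of R N)
  quot : ∀ (M : ModuleCat.{u} R) (N : Submodule R M), S M → S (ModuleCat.of R (M ⧸ N))
  extension : ∀ (M : ModuleCat.{u} R) (N : Submodule R M),
    S (ModuleCat.of R N) → S (ModuleCat.of R (M ⧸ N)) → S M

section Torsion

variable {M N : Type u} [AddCommGroup M] [Module R M] [AddCommGroup N] [Module R N]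

theorem mem_torsionGamma_iff {a : Ideal R} {x : M} :
    x ∈ torsionGamma a M ↔ ∃ n : ℕ, x ∈ torsionBySet R M ↑(a ^ n) :=
  Ideal.primaryComponent_mem M a x

theorem torsionGamma_anti {a b : Ideal R} (hab : a ≤ b) :
    torsionGamma b M ≤ torsionGamma a M :=
  iSup_mono fun n => torsionBySet_le_torsionBySet_of_subset (Ideal.pow_right_mono hab n)

theorem comap_torsionBySet {f : N →ₗ[R] M} (hf : Function.Injective f) (s : Set R) :
    (torsionBySet R M s).comap f = torsionBySet R N s := by
  ext x
  simp only [mem_comap, mem_torsionBySet_iff, ← map_smul, map_eq_zero_iff f hf]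

theorem comap_torsionGamma {f : N →ₗ[R] M} (hf : Function.Injective f) (a : Ideal R) :
    (torsionGamma a M).comap f = torsionGamma a N := by
  ext x
  simp only [mem_comap, mem_torsionGamma_iff, ← comap_torsionBySet hf]

theorem torsionGamma_eq_top_of_le {a : Ideal R} {P : Submodule R M}
    (h : P ≤ torsionGamma a M) : torsionGamma a P = ⊤ := by
  rw [← comap_torsionGamma P.injective_subtype, comap_subtype_eq_top.2 h]

theorem exists_injective_torsionBySet {f : N →ₗ[R] M} (hf : Function.Injective f)
    (s : Set R) :
    ∃ g : torsionBySet R N s →ₗ[R] torsionBySet R M s, Function.Injective g :=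
  ⟨f.restrict fun _ hx => (comap_torsionBySet hf s).ge hx,
    fun _ _ h => Subtype.ext (hf (congrArg Subtype.val h))⟩

end Torsion

theorem IsoClosed.of_injective {S : ModuleCat.{u} R → Prop} (hiso : IsoClosed S)
    (hsub : ∀ (M : ModuleCat.{u} R) (N : Submodule R M), S M → S (ModuleCat.of R N))
    {M N : Type u} [AddCommGroup M] [Module R M] [AddCommGroup N] [Module R N]
    (f : N →ₗ[R] M) (hf : Function.Injective f) (hM : S (ModuleCat.of R M)) :
    S (ModuleCat.of R N) :=
  hiso (LinearEquiv.ofInjective f hf).symm (hsub (ModuleCat.of R M) (LinearMap.range f) hM)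

theorem stmt0_general (a b : Ideal R) (hab : a ≤ b)
    (S : ModuleCat.{u} R → Prop)
    (hiso : IsoClosed S)
    (hsub : ∀ (M : ModuleCat.{u} R) (N : Submodule R M), S M → S (ModuleCat.of R N))
    (hCa : CCond S a)
    (M : ModuleCat.{u} R)
    (hM : S (ModuleCat.of R (Submodule.torsionBySet R M (a : Set R)))) :
    S (ModuleCat.of R (torsionGamma b M)) := by
  set Γ := torsionGamma b M
  have hΓ : torsionGamma a Γ = ⊤ := torsionGamma_eq_top_of_le (torsionGamma_anti hab)
  obtain ⟨g, hg⟩ := exists_injective_torsionBySet Γ.injective_subtype (a : Set R)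
  exact hCa (ModuleCat.of R Γ) hΓ (hiso.of_injective hsub g hg hM)

/-- If `S` is closed under submodules and satisfies the `C_a` condition, `a ⊆ b`,
and `(0 :_M a) ∈ S`, then `Γ_b(M) ∈ S`. -/
theorem stmt0 [IsNoetherianRing R] (a b : Ideal R) (hab : a ≤ b)
    (S : ModuleCat.{u} R → Prop)
    (hiso : IsoClosed S)
    (hsub : ∀ (M : ModuleCat.{u} R) (N : Submodule R M), S M → S (ModuleCat.of R N))
    (hCa : CCond S a)
    (M : ModuleCat.{u} R)
    (hM : S (ModuleCat.of R (Submodule.torsionBySet R M (a : Set R)))) :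
    S (ModuleCat.of R (torsionGamma b M)) :=
  stmt0_general a b hab S hiso hsub hCa M hM
end

section
/- Let R be a commutative noetherian ring, let 𝔞 be an ideal of R, and let 𝒮 be a class of R-modules that is closed under taking submodules. If 𝒮 satisfies the C_√𝔞 condition, where √𝔞 is the radical of 𝔞, then 𝒮 satisfies the C_𝔞 condition. -/
universe u

open Submodule

variable {R : Type u} [CommRing R]

/-! Over a noetherian ring some power of `√a` lies in `a`, so every `a`-torsion module is
`√a`-torsion; and since `a ≤ √a`, the module `(0 :_M √a)` is a submodule of `(0 :_M a)`. -/

theorem torsionGamma_le_of_pow_le {M : Type u} [AddCommGroup M] [Module R M]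
    {a b : Ideal R} {k : ℕ} (h : b ^ k ≤ a) :
    torsionGamma a M ≤ torsionGamma b M :=
  iSup_le fun n =>
    have hpow : b ^ (k * n) ≤ a ^ n := by
      rw [pow_mul]
      exact pow_le_pow_left' h n
    (torsionBySet_le_torsionBySet_of_subset hpow).trans
      (le_iSup (fun m => torsionBySet R M ((b ^ m : Ideal R) : Set R)) (k * n))

theorem CCondOn.of_le_of_pow_le {S : ModuleCat.{u} R → Prop} (hiso : IsoClosed S)
    (hsub : ∀ (M : ModuleCat.{u} R) (N : Submodule R M), S M → S (ModuleCat.of R N))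
    {a b : Ideal R} {k : ℕ} (hab : a ≤ b) (hba : b ^ k ≤ a) {M : ModuleCat.{u} R}
    (h : CCondOn S b M) : CCondOn S a M := by
  intro hΓ hS
  have hΓb : torsionGamma b M = ⊤ := top_le_iff.mp (hΓ ▸ torsionGamma_le_of_pow_le hba)
  have hle : torsionBySet R M (b : Set R) ≤ torsionBySet R M (a : Set R) :=
    torsionBySet_le_torsionBySet_of_subset hab
  exact h hΓb (hiso (comapSubtypeEquivOfLe hle) (hsub _ _ hS))

/-- If `S` is closed under submodules and satisfies the `C_√a` condition,
then `S` satisfies the `C_a` condition. -/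
theorem stmt1 [IsNoetherianRing R] (a : Ideal R)
    (S : ModuleCat.{u} R → Prop)
    (hiso : IsoClosed S)
    (hsub : ∀ (M : ModuleCat.{u} R) (N : Submodule R M), S M → S (ModuleCat.of R N))
    (hrad : CCond S a.radical) :
    CCond S a := by
  intro M
  obtain ⟨k, hk⟩ := a.exists_radical_pow_le_of_fg (IsNoetherian.noetherian a.radical)
  exact (hrad M).of_le_of_pow_le hiso hsub a.le_radical hk
end

section
/- Let R be a commutative noetherian ring, let 𝔞 and 𝔟 be ideals of R, and let 𝒮 be a Serre subcategory of R-modules. Then 𝒮 satisfies both the C_𝔞 and C_𝔟 conditions if and only if 𝒮 satisfies both the C_{𝔞+𝔟} and C_{𝔞∩𝔟} conditions. -/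
universe u

open Submodule

variable {R : Type u} [CommRing R]

/-!
The key tool: if `c` is finitely generated and `c • p ≤ W` with `W ∈ 𝒮`, then `p ∈ 𝒮` as soon as
`(0 :_p c) ∈ 𝒮`, because `x ↦ (gᵢ x)ᵢ` for generators `gᵢ` of `c` embeds `p / (0 :_p c)` in `Wᵏ`.

* `C_a, C_b ⇒ C_{a+b}`: `(0 :_M b)` is `a`-torsion with `a`-socle inside `(0 :_M a+b)`, so it lies
  in `𝒮` by `C_a`, and `C_b` applies to `M`.
* `C_a, C_b ⇒ C_{a∩b}`: `Γ_a M ∈ 𝒮` by `C_a`; `M / Γ_a M` is `b`-torsion and its `b`-socle is the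
  image of `(Γ_a M :_M b)`, which lies in `𝒮` by the key tool, so `C_b` and closure under
  extensions give `M ∈ 𝒮`.
* `C_{a+b}, C_{a∩b} ⇒ C_a`: `(0 :_M b)` is `(a+b)`-torsion, hence in `𝒮`; `K = (0 :_M a∩b)`
  satisfies `b K ⊆ (0 :_M a)` as `ab ⊆ a∩b`, so `K ∈ 𝒮` by the key tool, and `C_{a∩b}` gives
  `M ∈ 𝒮`.
-/

section Torsion

variable {M : Type u} [AddCommGroup M] [Module R M] {a b : Ideal R}

theorem mem_torsionBySet_ideal {x : M} :
    x ∈ torsionBySet R M (a : Set R) ↔ ∀ r ∈ a, r • x = 0 := by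
  simp [mem_torsionBySet_iff]

theorem torsionBySet_add :
    torsionBySet R M ((a + b : Ideal R) : Set R) =
      torsionBySet R M (a : Set R) ⊓ torsionBySet R M (b : Set R) := by
  ext x
  simp only [mem_inf, mem_torsionBySet_ideal, Submodule.add_eq_sup, Submodule.mem_sup]
  refine ⟨fun h => ⟨fun r hr => h r ⟨r, hr, 0, zero_mem _, add_zero r⟩,
    fun s hs => h s ⟨0, zero_mem _, s, hs, zero_add s⟩⟩, ?_⟩
  rintro ⟨ha, hb⟩ _ ⟨r, hr, s, hs, rfl⟩
  rw [add_smul, ha r hr, hb s hs, add_zero]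

theorem torsionBySet_comap_subtype (N : Submodule R M) (s : Set R) :
    torsionBySet R N s = (torsionBySet R M s).comap N.subtype := by
  ext x
  simp [mem_torsionBySet_iff, Subtype.ext_iff]

theorem mem_torsionGamma {x : M} :
    x ∈ torsionGamma a M ↔ ∃ n : ℕ, x ∈ torsionBySet R M ((a ^ n : Ideal R) : Set R) :=
  mem_iSup_of_directed _ <| Monotone.directed_le fun _ _ h =>
    torsionBySet_le_torsionBySet_of_subset (Ideal.pow_le_pow_right h)

theorem torsionBySet_le_torsionGamma :
    torsionBySet R M (a : Set R) ≤ torsionGamma a M :=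
  fun _ hx => mem_torsionGamma.2 ⟨1, by rwa [pow_one]⟩

theorem torsionGamma_antitone (h : a ≤ b) : torsionGamma b M ≤ torsionGamma a M := by
  intro x hx
  obtain ⟨n, hn⟩ := mem_torsionGamma.1 hx
  exact mem_torsionGamma.2
    ⟨n, torsionBySet_le_torsionBySet_of_subset (Ideal.pow_right_mono h n) hn⟩

theorem torsionGamma_add : torsionGamma (a + b) M = torsionGamma a M ⊓ torsionGamma b M := by
  refine le_antisymm (le_inf (torsionGamma_antitone le_sup_left)
    (torsionGamma_antitone le_sup_right)) fun x hx => ?_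
  obtain ⟨n, hn⟩ := mem_torsionGamma.1 (mem_inf.1 hx).1
  obtain ⟨m, hm⟩ := mem_torsionGamma.1 (mem_inf.1 hx).2
  refine mem_torsionGamma.2 ⟨n + m, torsionBySet_le_torsionBySet_of_subset
    Ideal.sup_pow_add_le_pow_sup_pow ?_⟩
  rw [← Submodule.add_eq_sup, torsionBySet_add]
  exact ⟨hn, hm⟩

theorem torsionGamma_comap_subtype (N : Submodule R M) :
    torsionGamma a N = (torsionGamma a M).comap N.subtype := by
  ext x
  simp only [mem_comap, mem_torsionGamma, torsionBySet_comap_subtype]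

/-- The `bⁿ`-multiples of an element killed by `(a ⊓ b)ⁿ` are killed by `aⁿ`,
as `aⁿbⁿ ≤ (a ⊓ b)ⁿ`. -/
theorem torsionGamma_quotient_eq_top (h : torsionGamma (a ⊓ b) M = ⊤) :
    torsionGamma b (M ⧸ torsionGamma a M) = ⊤ := by
  refine eq_top_iff.2 fun y _ => ?_
  obtain ⟨x, rfl⟩ := Submodule.Quotient.mk_surjective _ y
  obtain ⟨n, hn⟩ := mem_torsionGamma.1 (h ▸ mem_top : x ∈ torsionGamma (a ⊓ b) M)
  refine mem_torsionGamma.2 ⟨n, mem_torsionBySet_ideal.2 fun s hs => ?_⟩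
  rw [← Submodule.Quotient.mk_smul, Submodule.Quotient.mk_eq_zero]
  refine mem_torsionGamma.2 ⟨n, mem_torsionBySet_ideal.2 fun r hr => ?_⟩
  rw [smul_smul]
  refine mem_torsionBySet_ideal.1 hn _ ?_
  have hab : a ^ n * b ^ n ≤ (a ⊓ b) ^ n :=
    mul_pow a b n ▸ Ideal.pow_right_mono Ideal.mul_le_inf n
  exact hab (Ideal.mul_mem_mul hr hs)

end Torsion

namespace IsSerreClass

variable {S : ModuleCat.{u} R → Prop}
  {M : Type u} [AddCommGroup M] [Module R M] {N : Type u} [AddCommGroup N] [Module R N]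

theorem of_linearEquiv (hS : IsSerreClass S) (e : M ≃ₗ[R] N) (h : S (ModuleCat.of R M)) :
    S (ModuleCat.of R N) :=
  hS.iso (M := ModuleCat.of R M) (N := ModuleCat.of R N) e h

theorem of_le (hS : IsSerreClass S) {p q : Submodule R M} (hpq : p ≤ q)
    (h : S (ModuleCat.of R q)) : S (ModuleCat.of R p) :=
  hS.of_linearEquiv (comapSubtypeEquivOfLe hpq) (hS.subobj (ModuleCat.of R q) _ h)

theorem of_injective (hS : IsSerreClass S) (f : M →ₗ[R] N) (hf : Function.Injective f)
    (h : S (ModuleCat.of R N)) : S (ModuleCat.of R M) :=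
  hS.of_linearEquiv (LinearEquiv.ofInjective f hf).symm (hS.subobj (ModuleCat.of R N) _ h)

theorem map (hS : IsSerreClass S) (f : M →ₗ[R] N) {p : Submodule R M} (h : S (ModuleCat.of R p)) :
    S (ModuleCat.of R (p.map f)) := by
  have hq := hS.quot (ModuleCat.of R p) (LinearMap.ker (f.domRestrict p)) h
  rw [← LinearMap.range_domRestrict]
  exact hS.of_linearEquiv (f.domRestrict p).quotKerEquivRange hq

theorem of_ker_of_range (hS : IsSerreClass S) (f : M →ₗ[R] N)
    (hker : S (ModuleCat.of R (LinearMap.ker f)))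
    (hrange : S (ModuleCat.of R (LinearMap.range f))) : S (ModuleCat.of R M) :=
  hS.extension (ModuleCat.of R M) _ hker (hS.of_linearEquiv f.quotKerEquivRange.symm hrange)

theorem comap_subtype (hS : IsSerreClass S) {p q : Submodule R M}
    (h : S (ModuleCat.of R ↥(p ⊓ q))) : S (ModuleCat.of R (q.comap p.subtype)) :=
  hS.of_injective ((p.subtype ∘ₗ (q.comap p.subtype).subtype).codRestrict (p ⊓ q)
    fun x => ⟨(x : p).2, x.2⟩) (fun _ _ hxy => Subtype.ext (Subtype.ext congr(($hxy : M)))) h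

theorem of_inf_torsionBySet (hS : IsSerreClass S) {c : Ideal R} (hc : c.FG) {p W : Submodule R M}
    (hW : S (ModuleCat.of R W)) (hcp : c • p ≤ W)
    (h : S (ModuleCat.of R ↥(p ⊓ torsionBySet R M (c : Set R)))) : S (ModuleCat.of R p) := by
  induction c, hc using Submodule.fg_induction generalizing p with
  | singleton g =>
    rw [Ideal.submodule_span_eq, torsionBySet_ideal_span_singleton_eq] at h
    refine hS.of_ker_of_range (DistribSMul.toLinearMap R M g ∘ₗ p.subtype)
      (by rw [LinearMap.ker_comp]; exact hS.comap_subtype h) (hS.of_le ?_ hW)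
    rintro _ ⟨x, rfl⟩
    exact hcp (smul_mem_smul (mem_span_singleton_self g) x.2)
  | sup c d _ _ ihc ihd =>
    rw [← Submodule.add_eq_sup, torsionBySet_add, ← inf_assoc] at h
    have hc : c • p ≤ W := (smul_mono_left le_sup_left).trans hcp
    have hd : d • (p ⊓ torsionBySet R M (c : Set R)) ≤ W :=
      (smul_mono le_sup_right inf_le_left).trans hcp
    exact ihc hc (ihd hd h)

end IsSerreClass

namespace CCond

variable {S : ModuleCat.{u} R → Prop} {a b : Ideal R}

theorem of_submodule (hC : CCond S a) (hS : IsSerreClass S) {M : Type u} [AddCommGroup M]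
    [Module R M] {p : Submodule R M} (hp : p ≤ torsionGamma a M)
    (h : S (ModuleCat.of R ↥(p ⊓ torsionBySet R M (a : Set R)))) : S (ModuleCat.of R p) := by
  refine hC (ModuleCat.of R p) ?_ ?_
  · exact (torsionGamma_comap_subtype p).trans (comap_subtype_eq_top.2 hp)
  · change S (ModuleCat.of R (torsionBySet R p (a : Set R)))
    rw [torsionBySet_comap_subtype]
    exact hS.comap_subtype h

theorem add (ha : CCond S a) (hb : CCond S b) (hS : IsSerreClass S) : CCond S (a + b) := by
  intro M hM h
  rw [torsionGamma_add, inf_eq_top_iff] at hM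
  refine hb M hM.2 (ha.of_submodule hS (hM.1 ▸ le_top) (hS.of_le ?_ h))
  rw [torsionBySet_add, inf_comm]

theorem inf [IsNoetherianRing R] (ha : CCond S a) (hb : CCond S b) (hS : IsSerreClass S) :
    CCond S (a ⊓ b) := by
  intro M hM h
  have hΓ : S (ModuleCat.of R (torsionGamma a M)) := ha.of_submodule hS le_rfl
    (hS.of_le (inf_le_right.trans (torsionBySet_le_torsionBySet_of_subset inf_le_left)) h)
  set P := (torsionBySet R (M ⧸ torsionGamma a M) (b : Set R)).comap (torsionGamma a M).mkQ
  have hbP : b • P ≤ torsionGamma a M := by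
    refine smul_le.2 fun r hr x hx => (Submodule.Quotient.mk_eq_zero _).1 ?_
    rw [Submodule.Quotient.mk_smul]
    exact mem_torsionBySet_ideal.1 hx r hr
  have hP : S (ModuleCat.of R P) :=
    hS.of_inf_torsionBySet (IsNoetherian.noetherian b) hΓ hbP
      (hS.of_le (inf_le_right.trans (torsionBySet_le_torsionBySet_of_subset inf_le_right)) h)
  refine hS.extension M _ hΓ (hb _ (torsionGamma_quotient_eq_top hM) ?_)
  change S (ModuleCat.of R (torsionBySet R (M ⧸ torsionGamma a M) (b : Set R)))
  rw [← map_comap_eq_of_surjective (mkQ_surjective (torsionGamma a M))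
    (torsionBySet R (M ⧸ torsionGamma a M) (b : Set R))]
  exact hS.map _ hP

theorem of_add_of_inf [IsNoetherianRing R] (hadd : CCond S (a + b)) (hinf : CCond S (a ⊓ b))
    (hS : IsSerreClass S) : CCond S a := by
  intro M hM h
  have hT : S (ModuleCat.of R (torsionBySet R M (b : Set R))) := by
    refine hadd.of_submodule hS ?_ (hS.of_le ?_ h)
    · rw [torsionGamma_add, hM, top_inf_eq]
      exact torsionBySet_le_torsionGamma
    · rw [torsionBySet_add]
      exact inf_le_right.trans inf_le_left
  set K := torsionBySet R M ((a ⊓ b : Ideal R) : Set R)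
  have hbK : b • K ≤ torsionBySet R M (a : Set R) :=
    smul_le.2 fun r hr x hx => mem_torsionBySet_ideal.2 fun s hs => by
      rw [smul_smul]
      exact mem_torsionBySet_ideal.1 hx _ (Ideal.mul_le_inf (Ideal.mul_mem_mul hs hr))
  have hK : S (ModuleCat.of R K) :=
    hS.of_inf_torsionBySet (IsNoetherian.noetherian b) h hbK (hS.of_le inf_le_right hT)
  exact hinf M (eq_top_iff.2 (hM ▸ torsionGamma_antitone inf_le_left)) hK

end CCond

/-- A Serre subcategory `S` satisfies both `C_a` and `C_b` if and only if it satisfies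
both `C_{a+b}` and `C_{a∩b}`. -/
theorem stmt6 [IsNoetherianRing R] (a b : Ideal R)
    (S : ModuleCat.{u} R → Prop)
    (hS : IsSerreClass S) :
    (CCond S a ∧ CCond S b) ↔ (CCond S (a + b) ∧ CCond S (a ⊓ b)) :=
  ⟨fun ⟨ha, hb⟩ => ⟨ha.add hb hS, ha.inf hb hS⟩, fun ⟨hadd, hinf⟩ =>
    ⟨hadd.of_add_of_inf hinf hS, (add_comm a b ▸ hadd).of_add_of_inf (inf_comm a b ▸ hinf) hS⟩⟩
end
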